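/- Let N be a positive integer and let H ∈ M_{2N}(ℂ) be Hermitian and positive semidefinite. Then for every nonzero λ ∈ ℂ, ker((τ₃H − λ·1_{2N})²) = ker(τ₃H − λ·1_{2N}): the effective BdG Hamiltonian τ₃H is diagonalizable except possibly on its generalized eigenspace at zero. -/
import Mathlib


open Matrix
open scoped ComplexOrder

/-- `τ₃ = σ₃ ⊗ 1_N`, the 2N×2N matrix with block form [[1, 0],[0, -1]]. -/
noncomputable def tau3 (N : ℕ) : Matrix (Fin N ⊕ Fin N) (Fin N ⊕ Fin N) ℂ :=
  Matrix.fromBlocks 1 0 0 (-1)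

lemma tau3_sq (N : ℕ) : tau3 N * tau3 N = 1 := by
  simp [tau3, Matrix.fromBlocks_multiply, ← Matrix.fromBlocks_one]

lemma tau3_herm (N : ℕ) : (tau3 N).IsHermitian := by
  unfold Matrix.IsHermitian
  simp [tau3, Matrix.fromBlocks_conjTranspose]

lemma quad_star {n : Type*} [Fintype n] (M : Matrix n n ℂ) (hM : M.IsHermitian)
    (x y : n → ℂ) : star (star x ⬝ᵥ M *ᵥ y) = star y ⬝ᵥ M *ᵥ x := by
  conv_rhs => rw [star_dotProduct]
  congr 1
  rw [star_mulVec, hM.eq, ← dotProduct_mulVec]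

/-- The effective BdG Hamiltonian `τ₃H` of a stable free-boson system is
diagonalizable away from zero: for every nonzero eigenvalue `λ`,
`ker((τ₃H - λ)²) = ker(τ₃H - λ)`. -/
theorem stable_boson_diagonalizable_away_from_zero (N : ℕ) (hN : 0 < N)
    (H : Matrix (Fin N ⊕ Fin N) (Fin N ⊕ Fin N) ℂ)
    (hpsd : H.PosSemidef) :
    ∀ lam : ℂ, lam ≠ 0 →
      LinearMap.ker ((tau3 N * H - lam • 1) ^ 2).mulVecLin
        = LinearMap.ker (tau3 N * H - lam • 1).mulVecLin := by
  intro lam hlam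
  set A : Matrix (Fin N ⊕ Fin N) (Fin N ⊕ Fin N) ℂ := tau3 N * H - lam • 1 with hA
  refine le_antisymm (fun v hv => ?_) (fun v hv => ?_)
  swap
  · -- easy direction
    simp only [LinearMap.mem_ker, Matrix.mulVecLin_apply] at hv ⊢
    rw [pow_two, ← Matrix.mulVec_mulVec, hv, Matrix.mulVec_zero]
  · simp only [LinearMap.mem_ker, Matrix.mulVecLin_apply] at hv ⊢
    set w : (Fin N ⊕ Fin N) → ℂ := A *ᵥ v with hwdef
    have hw : A *ᵥ w = 0 := by
      rw [hwdef, Matrix.mulVec_mulVec, ← pow_two, hv]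
    -- From A w = 0 : τ₃ H w = lam • w
    have h1 : tau3 N *ᵥ (H *ᵥ w) = lam • w := by
      have := hw
      rw [hA, Matrix.sub_mulVec, Matrix.smul_mulVec, Matrix.one_mulVec,
        sub_eq_zero, ← Matrix.mulVec_mulVec] at this
      exact this
    have h2 : H *ᵥ w = lam • (tau3 N *ᵥ w) := by
      have := congrArg (fun x => tau3 N *ᵥ x) h1
      simpa [Matrix.mulVec_mulVec, ← Matrix.mul_assoc, tau3_sq, Matrix.mulVec_smul] using this
    -- w in terms of v : H v = τ₃ w + lam • τ₃ v
    have h3 : H *ᵥ v = tau3 N *ᵥ w + lam • (tau3 N *ᵥ v) := by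
      have hw' : w = tau3 N *ᵥ (H *ᵥ v) - lam • v := by
        rw [hwdef, hA, Matrix.sub_mulVec, Matrix.smul_mulVec, Matrix.one_mulVec,
          Matrix.mulVec_mulVec]
      have := congrArg (fun x => tau3 N *ᵥ x) hw'
      simp only [Matrix.mulVec_sub, Matrix.mulVec_smul, Matrix.mulVec_mulVec,
        ← Matrix.mul_assoc, tau3_sq, Matrix.one_mul, Matrix.one_mulVec] at this
      rw [this]
      abel
    set s : ℂ := star w ⬝ᵥ tau3 N *ᵥ w with hs_def
    set c : ℂ := star w ⬝ᵥ tau3 N *ᵥ v with hc_def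
    have hs_real : star s = s := by rw [hs_def, quad_star _ (tau3_herm N)]
    have hp : star w ⬝ᵥ H *ᵥ w = lam * s := by
      rw [h2, dotProduct_smul, smul_eq_mul, hs_def]
    have hp_real : star (star w ⬝ᵥ H *ᵥ w) = star w ⬝ᵥ H *ᵥ w :=
      quad_star _ hpsd.1 w w
    have key1 : (lam - star lam) * s = 0 := by
      have : lam * s = star lam * s := by
        conv_lhs => rw [← hp]
        rw [← hp_real, hp, star_mul', hs_real]
      rw [sub_mul]
      linear_combination this
    -- s = (star lam - lam) * c
    have key2 : s = (star lam - lam) * c := by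
      have e1 : star w ⬝ᵥ H *ᵥ v = s + lam * c := by
        rw [h3, dotProduct_add, dotProduct_smul, smul_eq_mul, hs_def, hc_def]
      have e2 : star w ⬝ᵥ H *ᵥ v = star lam * c := by
        rw [← quad_star _ hpsd.1 v w, h2, dotProduct_smul, smul_eq_mul,
          star_mul', quad_star _ (tau3_herm N), hc_def]
      have := e1.symm.trans e2
      linear_combination this
    have hs0 : s = 0 := by
      by_cases hreal : lam = star lam
      · rw [key2, ← hreal, sub_self, zero_mul]
      · rcases mul_eq_zero.mp key1 with h | h
        · exact absurd (sub_eq_zero.mp h) hreal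
        · exact h
    have hHw : H *ᵥ w = 0 := by
      rw [← hpsd.dotProduct_mulVec_zero_iff, hp, hs0, mul_zero]
    have hw0 : w = 0 := by
      have : lam • w = 0 := by rw [← h1, hHw, Matrix.mulVec_zero]
      rcases smul_eq_zero.mp this with h | h
      · exact absurd h hlam
      · exact h
    exact hw0
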